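/- Let f₁, f₂ be Boolean functions on disjoint sets of variables with p_i = Pr[f_i = true], and let f₁ ⊓ f₂ denote their conjunction. Then I[f₁ ⊓ f₂] = p₂·I[f₁] + p₁·I[f₂]. -/
import Mathlib

/-- Number of neighbors of `x` in the Hamming cube at which `f` differs from `f x`. -/
def sens {n : ℕ} (f : (Fin n → Bool) → Bool) (x : Fin n → Bool) : ℕ :=
  (Finset.univ.filter fun i : Fin n => f (Function.update x i (!(x i))) ≠ f x).card


/-- Total influence as average sensitivity: I[f] = E_x[#{i : flipping x_i changes f(x)}]. -/
noncomputable def infl {n : ℕ} (f : (Fin n → Bool) → Bool) : ℝ :=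
  (∑ x : Fin n → Bool, (sens f x : ℝ)) / 2 ^ n

/-- Pr[f = true] under the uniform measure. -/
noncomputable def prTrue {n : ℕ} (f : (Fin n → Bool) → Bool) : ℝ :=
  ((Finset.univ.filter fun x : Fin n → Bool => f x = true).card : ℝ) / 2 ^ n

/-- The disjoint conjunction f₁ ⊓ f₂ on n₁ + n₂ variables. -/
def conjF {n₁ n₂ : ℕ} (f₁ : (Fin n₁ → Bool) → Bool) (f₂ : (Fin n₂ → Bool) → Bool) :
    (Fin (n₁ + n₂) → Bool) → Bool :=
  fun x => f₁ (fun i => x (Fin.castAdd n₂ i)) && f₂ (fun j => x (Fin.natAdd n₁ j))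

def J {n₁ n₂ : ℕ} (x : Fin n₁ → Bool) (y : Fin n₂ → Bool) : Fin (n₁ + n₂) → Bool :=
  fun k => Sum.elim x y (finSumFinEquiv.symm k)

lemma J_castAdd {n₁ n₂ : ℕ} (x : Fin n₁ → Bool) (y : Fin n₂ → Bool) (i : Fin n₁) :
    J x y (Fin.castAdd n₂ i) = x i := by simp [J]

lemma J_natAdd {n₁ n₂ : ℕ} (x : Fin n₁ → Bool) (y : Fin n₂ → Bool) (j : Fin n₂) :
    J x y (Fin.natAdd n₁ j) = y j := by simp [J]

lemma update_J_left {n₁ n₂ : ℕ} (x : Fin n₁ → Bool) (y : Fin n₂ → Bool) (i : Fin n₁) (b : Bool) :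
    Function.update (J x y) (Fin.castAdd n₂ i) b = J (Function.update x i b) y := by
  funext k
  obtain ⟨s, rfl⟩ := finSumFinEquiv.surjective k
  cases s with
  | inl i' =>
      rw [finSumFinEquiv_apply_left, J_castAdd, Function.update_apply, Function.update_apply,
        J_castAdd]
      simp [Fin.castAdd_inj]
  | inr j' =>
      simp only [finSumFinEquiv_apply_right, J_natAdd, Function.update_apply]
      have : Fin.natAdd n₁ j' ≠ Fin.castAdd n₂ i := by
        simp [Fin.ext_iff]; omega
      simp [this, J_natAdd]

lemma update_J_right {n₁ n₂ : ℕ} (x : Fin n₁ → Bool) (y : Fin n₂ → Bool) (j : Fin n₂) (b : Bool) :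
    Function.update (J x y) (Fin.natAdd n₁ j) b = J x (Function.update y j b) := by
  funext k
  obtain ⟨s, rfl⟩ := finSumFinEquiv.surjective k
  cases s with
  | inl i' =>
      simp only [finSumFinEquiv_apply_left, Function.update_apply]
      have : Fin.castAdd n₂ i' ≠ Fin.natAdd n₁ j := by
        simp [Fin.ext_iff]; omega
      simp [this, J_castAdd]
  | inr j' =>
      rw [finSumFinEquiv_apply_right, J_natAdd, Function.update_apply, Function.update_apply,
        J_natAdd]
      have : Fin.natAdd n₁ j' = Fin.natAdd n₁ j ↔ j' = j := by
        constructor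
        · intro h; exact Fin.ext (by have := Fin.ext_iff.mp h; simpa using this)
        · rintro rfl; rfl
      simp [this]

lemma conjF_J {n₁ n₂ : ℕ} (f₁ : (Fin n₁ → Bool) → Bool) (f₂ : (Fin n₂ → Bool) → Bool)
    (x : Fin n₁ → Bool) (y : Fin n₂ → Bool) :
    conjF f₁ f₂ (J x y) = (f₁ x && f₂ y) := by
  simp [conjF, J_castAdd, J_natAdd]

lemma sens_eq_sum {n : ℕ} (f : (Fin n → Bool) → Bool) (x : Fin n → Bool) :
    (sens f x : ℝ) = ∑ i : Fin n,
      if f (Function.update x i (!(x i))) ≠ f x then (1 : ℝ) else 0 := by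
  rw [sens, Finset.card_filter]
  push_cast
  rfl

lemma sens_conj_J {n₁ n₂ : ℕ} (f₁ : (Fin n₁ → Bool) → Bool) (f₂ : (Fin n₂ → Bool) → Bool)
    (x : Fin n₁ → Bool) (y : Fin n₂ → Bool) :
    (sens (conjF f₁ f₂) (J x y) : ℝ)
      = (if f₂ y = true then (sens f₁ x : ℝ) else 0)
      + (if f₁ x = true then (sens f₂ y : ℝ) else 0) := by
  rw [sens_eq_sum, ← Equiv.sum_comp finSumFinEquiv, Fintype.sum_sum_type]
  simp only [finSumFinEquiv_apply_left, finSumFinEquiv_apply_right, J_castAdd, J_natAdd,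
    update_J_left, update_J_right, conjF_J]
  rw [sens_eq_sum, sens_eq_sum]
  cases hy : f₂ y <;> cases hx : f₁ x <;> simp [hy, hx]

def pairEquiv (n₁ n₂ : ℕ) : ((Fin n₁ → Bool) × (Fin n₂ → Bool)) ≃ (Fin (n₁ + n₂) → Bool) where
  toFun p := J p.1 p.2
  invFun z := (fun i => z (Fin.castAdd n₂ i), fun j => z (Fin.natAdd n₁ j))
  left_inv p := by simp [J_castAdd, J_natAdd]
  right_inv z := by
    funext k
    obtain ⟨s, rfl⟩ := finSumFinEquiv.surjective k
    cases s <;> simp [J]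

open Finset in
theorem influence_conj {n₁ n₂ : ℕ} (f₁ : (Fin n₁ → Bool) → Bool)
    (f₂ : (Fin n₂ → Bool) → Bool) :
    infl (conjF f₁ f₂) = prTrue f₂ * infl f₁ + prTrue f₁ * infl f₂ := by
  classical
  have hsum : ∑ z : Fin (n₁ + n₂) → Bool, (sens (conjF f₁ f₂) z : ℝ)
      = ((univ.filter fun y : Fin n₂ → Bool => f₂ y = true).card : ℝ)
          * (∑ x, (sens f₁ x : ℝ))
      + ((univ.filter fun x : Fin n₁ → Bool => f₁ x = true).card : ℝ)
          * (∑ y, (sens f₂ y : ℝ)) := by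
    rw [← Equiv.sum_comp (pairEquiv n₁ n₂) (fun z => (sens (conjF f₁ f₂) z : ℝ)),
      Fintype.sum_prod_type]
    have h1 : ∑ x : Fin n₁ → Bool, ∑ y : Fin n₂ → Bool,
        (if f₂ y = true then (sens f₁ x : ℝ) else 0)
        = ((univ.filter fun y : Fin n₂ → Bool => f₂ y = true).card : ℝ)
            * ∑ x, (sens f₁ x : ℝ) := by
      rw [Finset.mul_sum]
      refine Finset.sum_congr rfl fun x _ => ?_
      rw [← Finset.sum_filter, Finset.sum_const, nsmul_eq_mul]
    have h2 : ∑ x : Fin n₁ → Bool, ∑ y : Fin n₂ → Bool,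
        (if f₁ x = true then (sens f₂ y : ℝ) else 0)
        = ((univ.filter fun x : Fin n₁ → Bool => f₁ x = true).card : ℝ)
            * ∑ y, (sens f₂ y : ℝ) := by
      rw [Finset.sum_comm, Finset.mul_sum]
      refine Finset.sum_congr rfl fun y _ => ?_
      rw [← Finset.sum_filter, Finset.sum_const, nsmul_eq_mul]
    calc ∑ x, ∑ y, (sens (conjF f₁ f₂) (pairEquiv n₁ n₂ (x, y)) : ℝ)
        = ∑ x : Fin n₁ → Bool, ∑ y : Fin n₂ → Bool,
            ((if f₂ y = true then (sens f₁ x : ℝ) else 0)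
             + (if f₁ x = true then (sens f₂ y : ℝ) else 0)) := by
          refine Finset.sum_congr rfl fun x _ => Finset.sum_congr rfl fun y _ => ?_
          exact sens_conj_J f₁ f₂ x y
      _ = _ := by
          simp only [Finset.sum_add_distrib]
          rw [h1, h2]
  rw [infl, hsum, prTrue, prTrue, infl, infl, pow_add]
  have h1 : (2:ℝ) ^ n₁ ≠ 0 := by positivity
  have h2 : (2:ℝ) ^ n₂ ≠ 0 := by positivity
  field_simp
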